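/- For every μ > 0, the hazard rate function h(x) = g(x)/(1 - G(x)) of SSLUD(μ) is monotone nondecreasing on the interval [-μ, ∞); that is, SSLUD(μ) has increasing failure rate (IFR). -/

import Mathlib

/-!
On `[-μ, 0]` and `[0, μ]` the survival function `1 - G` is elementary, and after cancelling the
common factor `e^{∓x} / (2μ)` with the density the hazard rate becomes `(x + μ) / D(x)`, with
`D(x) = (2μ - e^{-μ}) e^{-x} + 1 - μ - x`, resp. `D(x) = x + μ + 1 - e^{x - μ}`; on `[μ, ∞)` the
tail is exponential and the hazard rate is `1`. By the quotient rule, monotonicity on the two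
bounded pieces reduces to `(2μ - e^{-μ}) e^{-x} (1 + x + μ) + 1 ≥ 0`, resp.
`1 + (x + μ - 1) e^{x - μ} ≥ 0`, both consequences of `1 + u ≤ eᵘ`. The three pieces share their
endpoints, so they glue to a monotone function on `[-μ, ∞)`.
-/

open MeasureTheory Real

noncomputable def g (μ : ℝ) (x : ℝ) : ℝ :=
  if x < -μ then 0
  else if x < μ then Real.exp (-|x|) * (x / (2 * μ) + 1 / 2)
  else Real.exp (-x)

noncomputable def G (μ : ℝ) (x : ℝ) : ℝ := ∫ t in Set.Iic x, g μ t

open Set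

theorem monotoneOn_div_of_hasDerivAt {s : Set ℝ} (hs : Convex ℝ s) {u v u' v' : ℝ → ℝ}
    (hu : ∀ x ∈ s, HasDerivAt u (u' x) x) (hv : ∀ x ∈ s, HasDerivAt v (v' x) x)
    (hv0 : ∀ x ∈ s, v x ≠ 0) (huv : ∀ x ∈ interior s, 0 ≤ u' x * v x - u x * v' x) :
    MonotoneOn (fun x => u x / v x) s := by
  have hderiv : ∀ x ∈ s, HasDerivAt (fun x => u x / v x)
      ((u' x * v x - u x * v' x) / v x ^ 2) x :=
    fun x hx => (hu x hx).div (hv x hx) (hv0 x hx)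
  refine monotoneOn_of_deriv_nonneg hs
    (fun x hx => (hderiv x hx).continuousAt.continuousWithinAt)
    (fun x hx => (hderiv x (interior_subset hx)).differentiableAt.differentiableWithinAt)
    fun x hx => ?_
  rw [(hderiv x (interior_subset hx)).deriv]
  exact div_nonneg (huv x hx) (sq_nonneg _)

theorem integral_exp_mul_add (a b c : ℝ) :
    ∫ t in a..b, exp t * (t + c) = exp b * (b + c - 1) - exp a * (a + c - 1) := by
  refine intervalIntegral.integral_eq_sub_of_hasDerivAt (f := fun t => exp t * (t + c - 1))
    (fun t _ => ?_) ((by fun_prop : Continuous fun t => exp t * (t + c)).intervalIntegrable a b)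
  exact ((hasDerivAt_exp t).mul (((hasDerivAt_id' t).add_const c).sub_const 1)).congr_deriv
    (by ring)

theorem integral_exp_neg_mul_add (a b c : ℝ) :
    ∫ t in a..b, exp (-t) * (t + c) = exp (-a) * (a + c + 1) - exp (-b) * (b + c + 1) := by
  rw [intervalIntegral.integral_eq_sub_of_hasDerivAt (f := fun t => -(exp (-t) * (t + c + 1)))
    (fun t _ => ?_) ((by fun_prop : Continuous fun t => exp (-t) * (t + c)).intervalIntegrable a b)]
  · ring
  exact ((hasDerivAt_neg' t).exp.mul
    (((hasDerivAt_id' t).add_const c).add_const 1)).neg.congr_deriv (by ring)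

section

variable {μ : ℝ}

-- The skew-symmetric construction: twice the Laplace density times the uniform CDF on `[-μ, μ]`.
theorem g_eq_exp_mul_max_min (hμ : 0 < μ) (x : ℝ) :
    g μ x = exp (-|x|) * max 0 (min 1 ((x + μ) / (2 * μ))) := by
  unfold g
  have h2μ : 0 < 2 * μ := by linarith
  split_ifs with hlt hlt'
  · rw [max_eq_left (min_le_of_right_le (div_nonpos_of_nonpos_of_nonneg (by linarith) h2μ.le)),
      mul_zero]
  · rw [min_eq_right ((div_le_one h2μ).2 (by linarith)),
      max_eq_right (div_nonneg (by linarith) h2μ.le)]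
    congr 1
    field_simp
  · rw [min_eq_left ((one_le_div h2μ).2 (by linarith)), max_eq_right zero_le_one, mul_one,
      abs_of_pos (by linarith)]

theorem continuous_g (hμ : 0 < μ) : Continuous (g μ) := by
  rw [funext (g_eq_exp_mul_max_min hμ)]
  fun_prop

theorem g_of_le_neg (hμ : 0 < μ) {x : ℝ} (hx : x ≤ -μ) : g μ x = 0 := by
  rw [g_eq_exp_mul_max_min hμ, max_eq_left (min_le_of_right_le
    (div_nonpos_of_nonpos_of_nonneg (by linarith) (by linarith))), mul_zero]

theorem g_of_mem_Icc (hμ : 0 < μ) {x : ℝ} (hx : x ∈ Icc (-μ) μ) :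
    g μ x = exp (-|x|) * (x + μ) / (2 * μ) := by
  rw [g_eq_exp_mul_max_min hμ, min_eq_right ((div_le_one (by linarith)).2 (by linarith [hx.2])),
    max_eq_right (div_nonneg (by linarith [hx.1]) (by linarith)), mul_div_assoc]

theorem g_of_le (hμ : 0 < μ) {x : ℝ} (hx : μ ≤ x) : g μ x = exp (-x) := by
  rw [g_eq_exp_mul_max_min hμ, min_eq_left ((one_le_div (by linarith)).2 (by linarith)),
    max_eq_right zero_le_one, mul_one, abs_of_pos (by linarith)]

theorem integrableOn_g_Iic (hμ : 0 < μ) (x : ℝ) : IntegrableOn (g μ) (Iic x) := by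
  have hzero : IntegrableOn (g μ) (Iic (-μ)) :=
    integrableOn_zero.congr_fun (fun t ht => (g_of_le_neg hμ ht).symm) measurableSet_Iic
  refine (hzero.union ((continuous_g hμ).integrableOn_Icc (a := -μ) (b := x))).mono_set
    fun t ht => ?_
  rcases le_total t (-μ) with h | h
  exacts [Or.inl h, Or.inr ⟨h, ht⟩]

theorem G_sub_G_eq_integral (hμ : 0 < μ) (a b : ℝ) : G μ b - G μ a = ∫ t in a..b, g μ t :=
  intervalIntegral.integral_Iic_sub_Iic (integrableOn_g_Iic hμ a) (integrableOn_g_Iic hμ b)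

theorem G_of_le_neg (hμ : 0 < μ) {x : ℝ} (hx : x ≤ -μ) : G μ x = 0 :=
  setIntegral_eq_zero_of_forall_eq_zero fun _ ht => g_of_le_neg hμ (le_trans ht hx)

theorem G_of_neg_le_of_nonpos (hμ : 0 < μ) {x : ℝ} (h₁ : -μ ≤ x) (h₂ : x ≤ 0) :
    G μ x = (exp x * (x + μ - 1) + exp (-μ)) / (2 * μ) := by
  have hint : ∫ t in (-μ)..x, g μ t = ∫ t in (-μ)..x, exp t * (t + μ) / (2 * μ) := by
    refine intervalIntegral.integral_congr fun t ht => ?_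
    rw [uIcc_of_le h₁] at ht
    rw [g_of_mem_Icc hμ ⟨ht.1, by linarith [ht.2]⟩, abs_of_nonpos (ht.2.trans h₂), neg_neg]
  have := G_sub_G_eq_integral hμ (-μ) x
  rw [G_of_le_neg hμ le_rfl, sub_zero, hint, intervalIntegral.integral_div,
    integral_exp_mul_add] at this
  rw [this]
  ring

theorem G_of_nonneg_of_le (hμ : 0 < μ) {x : ℝ} (h₁ : 0 ≤ x) (h₂ : x ≤ μ) :
    G μ x = (2 * μ + exp (-μ) - exp (-x) * (x + μ + 1)) / (2 * μ) := by
  have hint : ∫ t in (0 : ℝ)..x, g μ t = ∫ t in (0 : ℝ)..x, exp (-t) * (t + μ) / (2 * μ) := by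
    refine intervalIntegral.integral_congr fun t ht => ?_
    rw [uIcc_of_le h₁] at ht
    rw [g_of_mem_Icc hμ ⟨by linarith [ht.1], ht.2.trans h₂⟩, abs_of_nonneg ht.1]
  have := G_sub_G_eq_integral hμ 0 x
  rw [G_of_neg_le_of_nonpos hμ (by linarith) le_rfl, hint, intervalIntegral.integral_div,
    integral_exp_neg_mul_add, sub_eq_iff_eq_add] at this
  rw [this]
  field_simp
  simp only [exp_zero, neg_zero]
  ring

theorem G_of_le (hμ : 0 < μ) {x : ℝ} (hx : μ ≤ x) : G μ x = 1 - exp (-x) := by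
  have hint : ∫ t in μ..x, g μ t = ∫ t in μ..x, exp (-t) := by
    refine intervalIntegral.integral_congr fun t ht => ?_
    rw [uIcc_of_le hx] at ht
    exact g_of_le hμ ht.1
  have := G_sub_G_eq_integral hμ μ x
  rw [G_of_nonneg_of_le hμ hμ.le le_rfl, hint, intervalIntegral.integral_comp_neg, integral_exp,
    sub_eq_iff_eq_add] at this
  rw [this]
  field_simp
  ring

noncomputable def hazardRate (μ x : ℝ) : ℝ := g μ x / (1 - G μ x)

theorem hazardRate_of_neg_le_of_nonpos (hμ : 0 < μ) {x : ℝ} (h₁ : -μ ≤ x) (h₂ : x ≤ 0) :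
    hazardRate μ x = (x + μ) / ((2 * μ - exp (-μ)) * exp (-x) + 1 - μ - x) := by
  have hg : g μ x = exp x / (2 * μ) * (x + μ) := by
    rw [g_of_mem_Icc hμ ⟨h₁, by linarith⟩, abs_of_nonpos h₂, neg_neg]
    ring
  have hS : 1 - G μ x = exp x / (2 * μ) * ((2 * μ - exp (-μ)) * exp (-x) + 1 - μ - x) := by
    rw [G_of_neg_le_of_nonpos hμ h₁ h₂, exp_neg x]
    field_simp
    ring
  rw [hazardRate, hg, hS, mul_div_mul_left _ _ (by positivity)]

theorem hazardRate_of_nonneg_of_le (hμ : 0 < μ) {x : ℝ} (h₁ : 0 ≤ x) (h₂ : x ≤ μ) :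
    hazardRate μ x = (x + μ) / (x + μ + 1 - exp (x - μ)) := by
  have hg : g μ x = exp (-x) / (2 * μ) * (x + μ) := by
    rw [g_of_mem_Icc hμ ⟨by linarith, h₂⟩, abs_of_nonneg h₁]
    ring
  have hS : 1 - G μ x = exp (-x) / (2 * μ) * (x + μ + 1 - exp (x - μ)) := by
    rw [G_of_nonneg_of_le hμ h₁ h₂, sub_eq_neg_add x μ, exp_add, exp_neg x]
    field_simp
    ring
  rw [hazardRate, hg, hS, mul_div_mul_left _ _ (by positivity)]

theorem hazardRate_of_le (hμ : 0 < μ) {x : ℝ} (hx : μ ≤ x) : hazardRate μ x = 1 := by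
  rw [hazardRate, g_of_le hμ hx, G_of_le hμ hx, sub_sub_cancel, div_self (exp_pos _).ne']

theorem monotoneOn_hazardRate_Icc_neg_zero (hμ : 0 < μ) :
    MonotoneOn (hazardRate μ) (Icc (-μ) 0) := by
  refine (monotoneOn_div_of_hasDerivAt (convex_Icc _ _)
    (fun x _ => (hasDerivAt_id' x).add_const μ)
    (fun x _ => ((((hasDerivAt_neg' x).exp.const_mul (2 * μ - exp (-μ))).add_const 1).sub_const
      μ).fun_sub (hasDerivAt_id' x))
    (fun x hx => ?_) (fun x hx => ?_)).congr
    fun x hx => (hazardRate_of_neg_le_of_nonpos hμ hx.1 hx.2).symm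
  · have h₁ : 1 ≤ exp (-x) := one_le_exp (by linarith [hx.2])
    have h₂ : exp (-μ) * exp (-x) ≤ 1 := by
      rw [← exp_add]
      exact exp_le_one_iff.2 (by linarith [hx.1])
    nlinarith [mul_le_mul_of_nonneg_left h₁ hμ.le, hx.2]
  · rw [interior_Icc] at hx
    -- `1 + u ≤ eᵘ` at `u = x + μ`
    have hkey : exp (-μ) * exp (-x) * (x + μ + 1) ≤ 1 := by
      rw [← exp_add, show -μ + -x = -(x + μ) by ring, exp_neg, inv_mul_le_iff₀ (exp_pos _),
        mul_one]
      exact add_one_le_exp _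
    have hpos : 0 ≤ 2 * μ * exp (-x) * (x + μ + 1) := by
      have : 0 ≤ x + μ + 1 := by linarith [hx.1]
      positivity
    nlinarith [hkey, hpos]

theorem monotoneOn_hazardRate_Icc_zero (hμ : 0 < μ) :
    MonotoneOn (hazardRate μ) (Icc 0 μ) := by
  refine (monotoneOn_div_of_hasDerivAt (convex_Icc _ _)
    (fun x _ => (hasDerivAt_id' x).add_const μ)
    (fun x _ => (((hasDerivAt_id' x).add_const μ).add_const 1).fun_sub
      ((hasDerivAt_id' x).sub_const μ).exp)
    (fun x hx => ?_) (fun x hx => ?_)).congr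
    fun x hx => (hazardRate_of_nonneg_of_le hμ hx.1 hx.2).symm
  · have : exp (x - μ) ≤ 1 := exp_le_one_iff.2 (by linarith [hx.2])
    linarith [hx.1]
  · rw [interior_Icc] at hx
    have h₁ : exp (x - μ) ≤ 1 := exp_le_one_iff.2 (by linarith [hx.2])
    have h₂ : 0 ≤ (x + μ) * exp (x - μ) := by
      have : 0 ≤ x + μ := by linarith [hx.1]
      positivity
    nlinarith

end

theorem sslud_ifr (μ : ℝ) (hμ : 0 < μ) :
    MonotoneOn (fun x : ℝ => g μ x / (1 - G μ x)) (Set.Ici (-μ)) := by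
  have hneg : -μ ≤ 0 := by linarith
  have hIcc : MonotoneOn (hazardRate μ) (Icc (-μ) μ) := by
    rw [← Icc_union_Icc_eq_Icc hneg hμ.le]
    exact (monotoneOn_hazardRate_Icc_neg_zero hμ).union_right (monotoneOn_hazardRate_Icc_zero hμ)
      (isGreatest_Icc hneg) (isLeast_Icc hμ.le)
  have hIci : MonotoneOn (hazardRate μ) (Ici μ) :=
    monotoneOn_const.congr fun x hx => (hazardRate_of_le hμ hx).symm
  rw [← Icc_union_Ici_eq_Ici (by linarith : -μ ≤ μ)]
  exact hIcc.union_right hIci (isGreatest_Icc (by linarith)) isLeast_Ici
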